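/- arXiv:math/9812072 — 2 statements merged into one kernel-verified Lean document; each statement's English description precedes it below -/
import Mathlib

section
/- Fix a natural number r. For every natural number N and every partition λ of N all of whose parts are at most r, there exist a unique pair (μ, ν) such that: μ is a partition with pairwise distinct parts, all parts of μ are at most r; ν is a partition all of whose parts are at most r; and the multiset of parts of λ equals the multiset sum of the parts of μ, the parts of ν, and the parts of ν (i.e., λ = μ joined with two copies of ν). In other words, the map (μ, ν) ↦ λ = ννμ is a bijection from such pairs onto the set of partitions of N with all parts ≤ r. -/
/-! Compare multiplicities: a multiplicity `c` is uniquely `m + 2 n` with `m ≤ 1`, namely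
`m = c % 2` and `n = c / 2`; the parts of `μ` and `ν` are parts of `λ`, so inherit its bounds. -/

namespace Multiset

variable {α : Type*} [DecidableEq α]

noncomputable def halve (s : Multiset α) : Multiset α :=
  toFinsupp.symm (s.toFinsupp.mapRange (· / 2) (Nat.zero_div 2))

noncomputable def oddPart (s : Multiset α) : Multiset α :=
  toFinsupp.symm (s.toFinsupp.mapRange (· % 2) (Nat.zero_mod 2))

@[simp]
theorem count_halve (a : α) (s : Multiset α) : count a (halve s) = count a s / 2 := by
  simp [halve, ← toFinsupp_apply]

@[simp]
theorem count_oddPart (a : α) (s : Multiset α) : count a (oddPart s) = count a s % 2 := by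
  simp [oddPart, ← toFinsupp_apply]

theorem nodup_oddPart (s : Multiset α) : (oddPart s).Nodup :=
  nodup_iff_count_le_one.2 fun a => by simp only [count_oddPart]; omega

theorem oddPart_add_halve_add_halve (s : Multiset α) : oddPart s + halve s + halve s = s := by
  ext a
  simp only [count_add, count_oddPart, count_halve]
  omega

theorem eq_oddPart_and_eq_halve {s μ ν : Multiset α} (hμ : μ.Nodup) (hs : s = μ + ν + ν) :
    μ = oddPart s ∧ ν = halve s := by
  subst hs
  have hle := nodup_iff_count_le_one.1 hμ
  constructor <;> ext a <;> simp only [count_add, count_oddPart, count_halve] <;>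
    have := hle a <;> omega

theorem existsUnique_nodup_add_add (s : Multiset α) :
    ∃! p : Multiset α × Multiset α, p.1.Nodup ∧ s = p.1 + p.2 + p.2 :=
  ⟨(oddPart s, halve s), ⟨nodup_oddPart s, (oddPart_add_halve_add_halve s).symm⟩,
    fun _ ⟨hμ, hs⟩ => Prod.ext_iff.2 (eq_oddPart_and_eq_halve hμ hs)⟩

end Multiset

/-- The bijection `(μ, ν) ↦ ννμ` of the paper: every partition `λ` of `N` with all
parts at most `r` decomposes uniquely as a strict partition `μ` with parts ≤ `r`
together with two copies of a partition `ν` with parts ≤ `r`. -/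
theorem partition_unique_decomposition (r N : ℕ) (lam : Nat.Partition N)
    (hlam : ∀ p ∈ lam.parts, p ≤ r) :
    ∃! mn : Multiset ℕ × Multiset ℕ,
      mn.1.Nodup ∧
      (∀ p ∈ mn.1, 0 < p ∧ p ≤ r) ∧
      (∀ p ∈ mn.2, 0 < p ∧ p ≤ r) ∧
      lam.parts = mn.1 + mn.2 + mn.2 := by
  obtain ⟨⟨μ, ν⟩, ⟨hμ, hs⟩, huniq⟩ := Multiset.existsUnique_nodup_add_add lam.parts
  have hbounded : ∀ t ≤ lam.parts, ∀ p ∈ t, 0 < p ∧ p ≤ r := fun t ht p hp =>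
    ⟨lam.parts_pos (Multiset.mem_of_le ht hp), hlam p (Multiset.mem_of_le ht hp)⟩
  refine ⟨(μ, ν), ⟨hμ, hbounded μ ?_, hbounded ν ?_, hs⟩, fun p hp => huniq p ⟨hp.1, hp.2.2.2⟩⟩
  · exact hs ▸ (Multiset.le_add_right _ _).trans (Multiset.le_add_right _ _)
  · exact hs ▸ Multiset.le_add_left _ _
end

section
/- Let n, e, f, r, m be integers with 0 ≤ m, ⌊m/2⌋ ≤ r < e ≤ f. If δ(r − ⌊m/2⌋) ≥ ε(m), then δ(r) > m, where δ(u) = n − (f−u)(e−u) and ε : ℕ → ℕ is defined by ε(0) = 1, ε(1) = 2, ε(2k) = 0 and ε(2k+1) = 1 for every integer k ≥ 1. -/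
/-!
Write `s = ⌊m/2⌋`. Moving the evaluation point of `δ` from `r - s` up to `r` gains at least
`s(s+2)`, because both factors of `(f-u)(e-u)` stay `≥ 1` on the way. And `ε` was chosen exactly
so that `ε(m) + s(s+2) > m`.
-/

def lefschetzDelta (n e f u : ℤ) : ℤ := n - (f - u) * (e - u)

def lefschetzEpsilon (m : ℤ) : ℤ :=
  if m = 0 then 1 else if m = 1 then 2 else if m % 2 = 0 then 0 else 1

lemma mul_add_le_add_mul_add {a b s : ℤ} (ha : 1 ≤ a) (hb : 1 ≤ b) (hs : 0 ≤ s) :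
    a * b + s * (s + 2) ≤ (a + s) * (b + s) := by
  nlinarith

lemma lefschetzDelta_sub_add_le {n e f u s : ℤ} (hue : u < e) (hef : e ≤ f) (hs : 0 ≤ s) :
    lefschetzDelta n e f (u - s) + s * (s + 2) ≤ lefschetzDelta n e f u := by
  have := mul_add_le_add_mul_add (a := f - u) (b := e - u) (by omega) (by omega) hs
  unfold lefschetzDelta
  linarith [show f - (u - s) = f - u + s by ring, show e - (u - s) = e - u + s by ring]

lemma lt_lefschetzEpsilon_add {m : ℤ} (hm : 0 ≤ m) :
    m < lefschetzEpsilon m + m / 2 * (m / 2 + 2) := by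
  rcases (show m = 0 ∨ m = 1 ∨ 2 ≤ m by omega) with rfl | rfl | hm2
  · decide
  · decide
  have hk : 1 ≤ m / 2 := by omega
  have hε : m - 2 * (m / 2) ≤ lefschetzEpsilon m := by
    unfold lefschetzEpsilon
    split_ifs <;> omega
  nlinarith

theorem delta_conclusion_general (n e f r m : ℤ)
    (hm : 0 ≤ m) (hre : r < e) (hef : e ≤ f)
    (hδ : n - (f - (r - m / 2)) * (e - (r - m / 2)) ≥
      (if m = 0 then 1 else if m = 1 then 2 else if m % 2 = 0 then 0 else 1)) :
    n - (f - r) * (e - r) > m := by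
  have hgain := lefschetzDelta_sub_add_le (n := n) hre hef (s := m / 2) (by omega)
  have hε := lt_lefschetzEpsilon_add hm
  change lefschetzDelta n e f (r - m / 2) ≥ lefschetzEpsilon m at hδ
  change lefschetzDelta n e f r > m
  linarith

/-- The arithmetic step in the Conclusion of the Lefschetz theorem for degeneracy
loci: if `0 ≤ m`, `⌊m/2⌋ ≤ r < e ≤ f` and `δ(r − ⌊m/2⌋) ≥ ε(m)`, then `δ(r) > m`,
where `δ(u) = n − (f−u)(e−u)`. -/
theorem delta_conclusion (n e f r m : ℤ)
    (hm : 0 ≤ m) (hmr : m / 2 ≤ r) (hre : r < e) (hef : e ≤ f)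
    (hδ : n - (f - (r - m / 2)) * (e - (r - m / 2)) ≥
      (if m = 0 then 1 else if m = 1 then 2 else if m % 2 = 0 then 0 else 1)) :
    n - (f - r) * (e - r) > m :=
  delta_conclusion_general n e f r m hm hre hef hδ
end
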